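/- In the instance D(G,≻,ε): for every core-stable data exchange x there exists a symmetric core-stable data exchange x′ such that u_a(x′) ≥ u_a(x) for every agent a. -/

import Mathlib

open scoped BigOperators
open Classical

namespace DataExchangeHGM

noncomputable section

/-- A data exchange on an arbitrary agent type: entries in `[0,1]`, zero diagonal. -/
def IsExch {A : Type*} (x : A → A → ℝ) : Prop :=
  (∀ a b, 0 ≤ x a b ∧ x a b ≤ 1) ∧ ∀ a, x a a = 0

/-- An exchange over the coalition `U`: zero outside `U × U`. -/
def IsExchOver {A : Type*} (U : Set A) (x : A → A → ℝ) : Prop :=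
  IsExch x ∧ ∀ a b, (a ∉ U ∨ b ∉ U) → x a b = 0

/-- Core stability with respect to a utility function `u` (taking the whole exchange). -/
def CoreStable {A : Type*} (u : (A → A → ℝ) → A → ℝ) (x : A → A → ℝ) : Prop :=
  ¬ ∃ (U : Set A) (y : A → A → ℝ), U.Nonempty ∧ IsExchOver U y ∧ ∀ a ∈ U, u x a < u y a

variable {V E : Type*}

/-- The agents of the instance `D(G,≻,ε)`: one edge agent and one intermediate agent per
hyperedge, and one vertex agent per vertex. -/
abbrev Agent (V E : Type*) := E ⊕ (E ⊕ V)

/-- The edge agent of hyperedge `e`. -/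
def edgeA (e : E) : Agent V E := Sum.inl e

/-- The intermediate agent `i_e` of hyperedge `e`. -/
def interA (e : E) : Agent V E := Sum.inr (Sum.inl e)

/-- The vertex agent of vertex `v`. -/
def vertA (v : V) : Agent V E := Sum.inr (Sum.inr v)

variable [Fintype E]

/-- `E(v)`: the hyperedges containing `v`, where `ends e : Fin 3 → V` lists the three
vertices of `e`. -/
def Ev (ends : E → Fin 3 → V) (v : V) : Finset E :=
  Finset.univ.filter (fun e => ∃ t, ends e t = v)

/-- The weight `w_v(e)`: `d+H+1`, `d+H`, or `H` according to the rank (0 = most preferred,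
1 = second, 2 = least) of `e` in `v`'s preference order. -/
def weight (d H : ℝ) (rank : V → E → Fin 3) (v : V) (e : E) : ℝ :=
  if rank v e = 0 then d + H + 1 else if rank v e = 1 then d + H else H

/-- Utility of the edge agent `e`: payoff `x_{i_e,e}` minus cost `(1-ε)·x_{e,i_e}`. -/
def uEdge (ε : ℝ) (x : Agent V E → Agent V E → ℝ) (e : E) : ℝ :=
  x (interA e) (edgeA e) - (1 - ε) * x (edgeA e) (interA e)

/-- Utility of the intermediate agent `i_e`. -/
def uInter (ε : ℝ) (ends : E → Fin 3 → V) (x : Agent V E → Agent V E → ℝ) (e : E) : ℝ :=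
  min (x (edgeA e) (interA e))
      (min (x (vertA (ends e 0)) (interA e))
        (min (x (vertA (ends e 1)) (interA e)) (x (vertA (ends e 2)) (interA e))))
    - (1 - ε) *
      max (x (interA e) (edgeA e))
        (max (x (interA e) (vertA (ends e 0)))
          (max (x (interA e) (vertA (ends e 1))) (x (interA e) (vertA (ends e 2)))))

/-- Utility of the vertex agent `v`. -/
def uVert (d H Γ : ℝ) (ends : E → Fin 3 → V) (rank : V → E → Fin 3)
    (x : Agent V E → Agent V E → ℝ) (v : V) : ℝ :=
  (∑ e ∈ Ev ends v, weight d H rank v e * x (interA e) (vertA v))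
    - Γ * max ((∑ e ∈ Ev ends v, x (vertA v) (interA e)) - 1) 0

/-- The utility function of the instance `D(G,≻,ε)`. -/
def util (ε d H Γ : ℝ) (ends : E → Fin 3 → V) (rank : V → E → Fin 3)
    (x : Agent V E → Agent V E → ℝ) : Agent V E → ℝ
  | Sum.inl e => uEdge ε x e
  | Sum.inr (Sum.inl e) => uInter ε ends x e
  | Sum.inr (Sum.inr v) => uVert d H Γ ends rank x v

/-- A symmetric exchange: for every hyperedge `e`, all shares from `i_e` to the edge agent
and the three vertex agents agree (their common value is `f⁻(e)`), and all shares towards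
`i_e` agree (their common value is `f⁺(e)`). -/
def Symm (ends : E → Fin 3 → V) (x : Agent V E → Agent V E → ℝ) : Prop :=
  ∀ e : E, (∀ t : Fin 3, x (interA e) (vertA (ends e t)) = x (interA e) (edgeA e)) ∧
    (∀ t : Fin 3, x (vertA (ends e t)) (interA e) = x (edgeA e) (interA e))

/-- `f⁻(e)`: the common outgoing share of `i_e` in a symmetric exchange. -/
def fminus (x : Agent V E → Agent V E → ℝ) (e : E) : ℝ := x (interA e) (edgeA e)

/-- `f⁺(e)`: the common incoming share of `i_e` in a symmetric exchange. -/
def fplus (x : Agent V E → Agent V E → ℝ) (e : E) : ℝ := x (edgeA e) (interA e)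

end

/-! Symmetrize by letting each intermediate agent `i_e` send the maximum of its outgoing shares
to all four of its partners and receive the minimum of its incoming shares from all of them.
The utility of `i_e` depends only on that minimum and that maximum, so it is unchanged, while
edge and vertex agents now receive weakly more and send weakly less; their payoffs grow with what
they receive and their costs with what they send, so nobody loses. A coalition blocking an
exchange that is weakly better for everyone also blocks the original one. -/

theorem CoreStable.of_le {A : Type*} {u : (A → A → ℝ) → A → ℝ} {x x' : A → A → ℝ}
    (hx : CoreStable u x) (hle : ∀ a, u x a ≤ u x' a) : CoreStable u x' := by
  rintro ⟨U, y, hU, hy, hblock⟩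
  exact hx ⟨U, y, hU, hy, fun a ha => (hle a).trans_lt (hblock a ha)⟩

variable {V E : Type*} (ends : E → Fin 3 → V) (x : Agent V E → Agent V E → ℝ)

def inMin (e : E) : ℝ :=
  min (x (edgeA e) (interA e))
    (min (x (vertA (ends e 0)) (interA e))
      (min (x (vertA (ends e 1)) (interA e)) (x (vertA (ends e 2)) (interA e))))

def outMax (e : E) : ℝ :=
  max (x (interA e) (edgeA e))
    (max (x (interA e) (vertA (ends e 0)))
      (max (x (interA e) (vertA (ends e 1))) (x (interA e) (vertA (ends e 2)))))

theorem uInter_eq (ε : ℝ) (e : E) :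
    uInter ε ends x e = inMin ends x e - (1 - ε) * outMax ends x e := rfl

noncomputable def symmetrize : Agent V E → Agent V E → ℝ
  | Sum.inr (Sum.inl e), Sum.inl e' => if e = e' then outMax ends x e else 0
  | Sum.inr (Sum.inl e), Sum.inr (Sum.inr v) => if ∃ t, ends e t = v then outMax ends x e else 0
  | Sum.inl e', Sum.inr (Sum.inl e) => if e = e' then inMin ends x e else 0
  | Sum.inr (Sum.inr v), Sum.inr (Sum.inl e) => if ∃ t, ends e t = v then inMin ends x e else 0
  | _, _ => 0

variable {ends x}

section symmetrize

variable (e : E) (t : Fin 3)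

@[simp] theorem symmetrize_edgeA_interA :
    symmetrize ends x (edgeA e) (interA e) = inMin ends x e := if_pos rfl

@[simp] theorem symmetrize_vertA_interA :
    symmetrize ends x (vertA (ends e t)) (interA e) = inMin ends x e := if_pos ⟨t, rfl⟩

@[simp] theorem symmetrize_interA_edgeA :
    symmetrize ends x (interA e) (edgeA e) = outMax ends x e := if_pos rfl

@[simp] theorem symmetrize_interA_vertA :
    symmetrize ends x (interA e) (vertA (ends e t)) = outMax ends x e := if_pos ⟨t, rfl⟩

theorem inMin_le_edgeA : inMin ends x e ≤ x (edgeA e) (interA e) := min_le_left _ _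

theorem inMin_le_vertA : inMin ends x e ≤ x (vertA (ends e t)) (interA e) := by
  unfold inMin
  fin_cases t
  · exact (min_le_right _ _).trans (min_le_left _ _)
  · exact (min_le_right _ _).trans ((min_le_right _ _).trans (min_le_left _ _))
  · exact (min_le_right _ _).trans ((min_le_right _ _).trans (min_le_right _ _))

theorem edgeA_le_outMax : x (interA e) (edgeA e) ≤ outMax ends x e := le_max_left _ _

theorem vertA_le_outMax : x (interA e) (vertA (ends e t)) ≤ outMax ends x e := by
  unfold outMax
  fin_cases t
  · exact le_max_of_le_right (le_max_left _ _)
  · exact le_max_of_le_right (le_max_of_le_right (le_max_left _ _))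
  · exact le_max_of_le_right (le_max_of_le_right (le_max_right _ _))

theorem inMin_symmetrize : inMin ends (symmetrize ends x) e = inMin ends x e := by
  simp only [inMin, symmetrize_edgeA_interA, symmetrize_vertA_interA, min_self]

theorem outMax_symmetrize : outMax ends (symmetrize ends x) e = outMax ends x e := by
  simp only [outMax, symmetrize_interA_edgeA, symmetrize_interA_vertA, max_self]

theorem inMin_mem_Icc (hx : IsExch x) : inMin ends x e ∈ Set.Icc 0 1 :=
  ⟨le_min (hx.1 _ _).1 (le_min (hx.1 _ _).1 (le_min (hx.1 _ _).1 (hx.1 _ _).1)),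
    (inMin_le_edgeA e).trans (hx.1 _ _).2⟩

theorem outMax_mem_Icc (hx : IsExch x) : outMax ends x e ∈ Set.Icc 0 1 :=
  ⟨(hx.1 _ _).1.trans (edgeA_le_outMax e),
    max_le (hx.1 _ _).2 (max_le (hx.1 _ _).2 (max_le (hx.1 _ _).2 (hx.1 _ _).2))⟩

end symmetrize

theorem isExch_symmetrize (hx : IsExch x) : IsExch (symmetrize ends x) := by
  have h01 : (0 : ℝ) ∈ Set.Icc 0 1 := ⟨le_rfl, zero_le_one⟩
  refine ⟨fun a b => ?_, by rintro (e | e | v) <;> rfl⟩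
  rcases a with e | e | v <;> rcases b with e' | e' | v' <;> simp only [symmetrize] <;>
    (try split_ifs) <;>
    first | exact h01 | exact inMin_mem_Icc _ hx | exact outMax_mem_Icc _ hx

theorem symm_symmetrize : Symm ends (symmetrize ends x) := fun e =>
  ⟨fun t => by simp only [symmetrize_interA_vertA, symmetrize_interA_edgeA],
    fun t => by simp only [symmetrize_vertA_interA, symmetrize_edgeA_interA]⟩

theorem uEdge_le_symmetrize {ε : ℝ} (hε : ε ≤ 1) (e : E) :
    uEdge ε x e ≤ uEdge ε (symmetrize ends x) e := by
  simp only [uEdge, symmetrize_edgeA_interA, symmetrize_interA_edgeA]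
  have hin := mul_le_mul_of_nonneg_left (inMin_le_edgeA (ends := ends) (x := x) e)
    (sub_nonneg.mpr hε)
  linarith [edgeA_le_outMax (ends := ends) (x := x) e]

theorem uInter_symmetrize (ε : ℝ) (e : E) :
    uInter ε ends (symmetrize ends x) e = uInter ε ends x e := by
  rw [uInter_eq, uInter_eq, inMin_symmetrize, outMax_symmetrize]

theorem weight_nonneg {d H : ℝ} (hd : 0 ≤ d) (hH : 0 ≤ H) (rank : V → E → Fin 3) (v : V)
    (e : E) : 0 ≤ weight d H rank v e := by
  unfold weight
  split_ifs <;> positivity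

theorem uVert_le_symmetrize [Fintype E] {d H Γ : ℝ} (hd : 0 ≤ d) (hH : 0 ≤ H) (hΓ : 0 ≤ Γ)
    (rank : V → E → Fin 3) (v : V) :
    uVert d H Γ ends rank x v ≤ uVert d H Γ ends rank (symmetrize ends x) v := by
  have hpay : ∑ e ∈ Ev ends v, weight d H rank v e * x (interA e) (vertA v)
      ≤ ∑ e ∈ Ev ends v, weight d H rank v e * symmetrize ends x (interA e) (vertA v) := by
    refine Finset.sum_le_sum fun e he => ?_
    obtain ⟨t, rfl⟩ := (Finset.mem_filter.mp he).2
    rw [symmetrize_interA_vertA]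
    exact mul_le_mul_of_nonneg_left (vertA_le_outMax e t) (weight_nonneg hd hH rank _ e)
  have hsent : ∑ e ∈ Ev ends v, symmetrize ends x (vertA v) (interA e)
      ≤ ∑ e ∈ Ev ends v, x (vertA v) (interA e) := by
    refine Finset.sum_le_sum fun e he => ?_
    obtain ⟨t, rfl⟩ := (Finset.mem_filter.mp he).2
    rw [symmetrize_vertA_interA]
    exact inMin_le_vertA e t
  have hcost := mul_le_mul_of_nonneg_left
    (max_le_max_right 0 (sub_le_sub_right hsent 1)) hΓ
  rw [uVert, uVert]
  linarith

theorem util_le_symmetrize [Fintype E] {ε d H Γ : ℝ} (hε : ε ≤ 1) (hd : 0 ≤ d) (hH : 0 ≤ H)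
    (hΓ : 0 ≤ Γ) (rank : V → E → Fin 3) :
    ∀ a, util ε d H Γ ends rank x a ≤ util ε d H Γ ends rank (symmetrize ends x) a
  | Sum.inl e => uEdge_le_symmetrize hε e
  | Sum.inr (Sum.inl e) => (uInter_symmetrize ε e).ge
  | Sum.inr (Sum.inr v) => uVert_le_symmetrize hd hH hΓ rank v

theorem exists_symmetric_core_stable_general
    (V E : Type*) [Fintype E]
    (ends : E → Fin 3 → V)
    (rank : V → E → Fin 3)
    (ε d H Γ : ℝ) (hε0 : 0 < ε) (hε1 : ε < 1/1000)
    (hd : d = ε ^ (-(1:ℝ)/4)) (hH : H = ε ^ (-(1:ℝ)/2)) (hΓ : Γ = 3*(d+H+1)/ε)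
    (x : Agent V E → Agent V E → ℝ) (hx : IsExch x)
    (hcs : CoreStable (util ε d H Γ ends rank) x) :
    ∃ x' : Agent V E → Agent V E → ℝ, IsExch x' ∧ Symm ends x' ∧
      CoreStable (util ε d H Γ ends rank) x' ∧
      ∀ a : Agent V E, util ε d H Γ ends rank x a ≤ util ε d H Γ ends rank x' a := by
  have hd0 : 0 ≤ d := hd ▸ Real.rpow_nonneg hε0.le _
  have hH0 : 0 ≤ H := hH ▸ Real.rpow_nonneg hε0.le _
  have hΓ0 : 0 ≤ Γ := hΓ ▸ by positivity
  have hle := util_le_symmetrize (ends := ends) (x := x) (ε := ε) (by linarith) hd0 hH0 hΓ0 rank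
  exact ⟨symmetrize ends x, isExch_symmetrize hx, symm_symmetrize, hcs.of_le hle, hle⟩

/-- In the instance `D(G,≻,ε)`, for every core-stable data exchange `x`
there is a symmetric core-stable data exchange `x'` that is weakly better for every agent. -/
theorem exists_symmetric_core_stable
    (V E : Type*) [Fintype V] [Fintype E]
    (ends : E → Fin 3 → V) (hends : ∀ e, Function.Injective (ends e))
    (hdeg : ∀ v, (Ev ends v).card ≤ 3)
    (rank : V → E → Fin 3)
    (hrank_inj : ∀ v, ∀ e ∈ Ev ends v, ∀ e' ∈ Ev ends v, rank v e = rank v e' → e = e')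
    (hrank_seg : ∀ v, ∀ e ∈ Ev ends v, (rank v e : ℕ) < (Ev ends v).card)
    (ε d H Γ : ℝ) (hε0 : 0 < ε) (hε1 : ε < 1/1000)
    (hd : d = ε ^ (-(1:ℝ)/4)) (hH : H = ε ^ (-(1:ℝ)/2)) (hΓ : Γ = 3*(d+H+1)/ε)
    (x : Agent V E → Agent V E → ℝ) (hx : IsExch x)
    (hcs : CoreStable (util ε d H Γ ends rank) x) :
    ∃ x' : Agent V E → Agent V E → ℝ, IsExch x' ∧ Symm ends x' ∧
      CoreStable (util ε d H Γ ends rank) x' ∧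
      ∀ a : Agent V E, util ε d H Γ ends rank x a ≤ util ε d H Γ ends rank x' a :=
  exists_symmetric_core_stable_general V E ends rank ε d H Γ hε0 hε1 hd hH hΓ x hx hcs

end DataExchangeHGM
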